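/- Let L be a field of characteristic 2, let φ be an anisotropic quadratic form over L, and let s, t be independent variables over L. Then the quadratic form φ ⊥ s·φ ⊥ t·φ ⊥ st·φ (i.e., the Pfister multiple ⟨⟨s,t⟩⟩ ⊗ φ) is anisotropic over the rational function field L(s,t). -/

import Mathlib

/-!
Over the polynomial ring it suffices, applied once for `s` and once for `t`, that `φ ⊥ X·φ` is
anisotropic over `R[X]` whenever `φ` is anisotropic over `R`; anisotropy then passes to the field
of fractions by clearing denominators. Over `R[X]`, if `d` is the largest degree of an entry of
`f`, the coefficient of `φ(f)` in degree `2d` is `φ` of the vector of `d`-th coefficients of `f`,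
which is nonzero by anisotropy. Hence `φ(f)` has even degree unless
`f = 0`, while `X·φ(g)` has odd degree unless `g = 0`, so `φ(f) + X·φ(g) = 0` forces
`f = g = 0`.
-/

open Polynomial

namespace MvPolynomial

variable (R : Type*) [CommRing R]

noncomputable def finTwoEquivPolynomialPolynomial : MvPolynomial (Fin 2) R ≃ₐ[R] R[X][X] :=
  (renameEquiv R (Equiv.swap 0 1)).trans <| (finSuccEquiv R 1).trans <|
    Polynomial.mapAlgEquiv (uniqueAlgEquiv R (Fin 1))

theorem finTwoEquivPolynomialPolynomial_X_zero :
    finTwoEquivPolynomialPolynomial R (X 0) = Polynomial.C Polynomial.X := by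
  have h := finSuccEquiv_X_succ (R := R) (n := 1) (j := 0)
  rw [Fin.succ_zero_eq_one] at h
  simp [finTwoEquivPolynomialPolynomial, h]

theorem finTwoEquivPolynomialPolynomial_X_one :
    finTwoEquivPolynomialPolynomial R (X 1) = Polynomial.X := by
  simp [finTwoEquivPolynomialPolynomial, finSuccEquiv_X_zero]

end MvPolynomial

namespace Matrix

variable {ι κ R S : Type*} [CommRing R] [CommRing S]

/-- Gram matrix of `⟨⟨a⟩⟩ ⊗ φ = φ ⊥ a·φ`, where `φ` has Gram matrix `A`. -/
def pfisterMul (a : R) (A : Matrix ι ι R) : Matrix (ι ⊕ ι) (ι ⊕ ι) R :=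
  fromBlocks A 0 0 (a • A)

theorem pfisterMul_map (f : R →+* S) (a : R) (A : Matrix ι ι R) :
    (pfisterMul a A).map f = pfisterMul (f a) (A.map f) := by
  simp [pfisterMul, fromBlocks_map, map_smul' _ _ _ (map_mul f)]

variable [Fintype ι] [DecidableEq ι] [Fintype κ] [DecidableEq κ]

theorem toQuadraticForm'_apply_eq_sum (A : Matrix ι ι R) (v : ι → R) :
    A.toQuadraticForm' v = ∑ i, ∑ j, v i * v j * A i j := by
  simp [toQuadraticForm', toLinearMap₂'_apply, mul_assoc]

theorem toQuadraticForm'_fromBlocks_zero (A : Matrix ι ι R) (B : Matrix κ κ R) (w : ι ⊕ κ → R) :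
    (fromBlocks A 0 0 B).toQuadraticForm' w
      = A.toQuadraticForm' (w ∘ Sum.inl) + B.toQuadraticForm' (w ∘ Sum.inr) := by
  simp [toQuadraticForm'_apply_eq_sum, Fintype.sum_sum_type]

theorem toQuadraticForm'_smul (a : R) (A : Matrix ι ι R) (v : ι → R) :
    (a • A).toQuadraticForm' v = a * A.toQuadraticForm' v := by
  simp only [toQuadraticForm'_apply_eq_sum, smul_apply, smul_eq_mul, Finset.mul_sum]
  exact Finset.sum_congr rfl fun i _ => Finset.sum_congr rfl fun j _ => by ring

theorem toQuadraticForm'_map_apply (f : R →+* S) (A : Matrix ι ι R) (v : ι → R) :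
    (A.map f).toQuadraticForm' (f ∘ v) = f (A.toQuadraticForm' v) := by
  simp [toQuadraticForm'_apply_eq_sum]

theorem anisotropic_of_anisotropic_map {f : R →+* S} (hf : Function.Injective f)
    {A : Matrix ι ι R} (h : (A.map f).toQuadraticForm'.Anisotropic) :
    A.toQuadraticForm'.Anisotropic := by
  intro v hv
  have : f ∘ v = 0 := h _ (by rw [toQuadraticForm'_map_apply, hv, map_zero])
  funext i
  exact hf (by simpa using congrFun this i)

theorem anisotropic_map_algebraMap {F : Type*} [Field F] [Algebra R F] [IsFractionRing R F]
    {A : Matrix ι ι R} (hA : A.toQuadraticForm'.Anisotropic) :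
    (A.map (algebraMap R F)).toQuadraticForm'.Anisotropic := by
  intro w hw
  obtain ⟨b, hb⟩ := IsLocalization.exist_integer_multiples_of_finite (nonZeroDivisors R) w
  choose v hv using hb
  have hbv : algebraMap R F ∘ v = algebraMap R F b • w :=
    funext fun i => (hv i).trans (Algebra.smul_def _ _)
  have hv0 : v = 0 := hA v <| IsFractionRing.injective R F <| by
    rw [← toQuadraticForm'_map_apply, hbv, QuadraticMap.map_smul, hw, smul_zero, map_zero]
  have hb0 : algebraMap R F b ≠ 0 := (IsLocalization.map_units F b).ne_zero
  funext i
  simpa [hv0, hb0] using (congrFun hbv i).symm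

theorem coeff_toQuadraticForm'_map_C {A : Matrix ι ι R} {f : ι → R[X]} {d : ℕ}
    (hf : ∀ i, (f i).natDegree ≤ d) :
    ((A.map C).toQuadraticForm' f).coeff (d + d) = A.toQuadraticForm' fun i => (f i).coeff d := by
  simp only [toQuadraticForm'_apply_eq_sum, finsetSum_coeff, map_apply, coeff_mul_C,
    coeff_mul_add_eq_of_natDegree_le (hf _) (hf _)]

theorem natDegree_toQuadraticForm'_map_C_le (A : Matrix ι ι R) {f : ι → R[X]} {d : ℕ}
    (hf : ∀ i, (f i).natDegree ≤ d) : ((A.map C).toQuadraticForm' f).natDegree ≤ d + d := by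
  rw [toQuadraticForm'_apply_eq_sum]
  refine natDegree_sum_le_of_forall_le _ _ fun i _ => natDegree_sum_le_of_forall_le _ _ fun j _ => ?_
  simpa using natDegree_mul_le_of_le (natDegree_mul_le_of_le (hf i) (hf j)) (natDegree_C _).le

theorem toQuadraticForm'_map_C_ne_zero_and_even {A : Matrix ι ι R}
    (hA : A.toQuadraticForm'.Anisotropic) {f : ι → R[X]} (hf : f ≠ 0) :
    (A.map C).toQuadraticForm' f ≠ 0 ∧ Even ((A.map C).toQuadraticForm' f).natDegree := by
  classical
  obtain ⟨i₀, hi₀⟩ := Function.ne_iff.mp hf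
  obtain ⟨k, hk, hmax⟩ := Finset.exists_max_image {i | f i ≠ 0} (fun i => (f i).natDegree)
    ⟨i₀, by simpa using hi₀⟩
  set d := (f k).natDegree
  have hle : ∀ i, (f i).natDegree ≤ d := fun i => by
    by_cases hi : f i = 0
    · simp [hi]
    · exact hmax i (by simpa using hi)
  have hlead : (A.toQuadraticForm' fun i => (f i).coeff d) ≠ 0 := fun h =>
    (by simpa using hk : f k ≠ 0) (leadingCoeff_eq_zero.mp (congrFun (hA _ h) k))
  have hcoeff := coeff_toQuadraticForm'_map_C (A := A) hle
  have hdeg : ((A.map C).toQuadraticForm' f).natDegree = d + d :=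
    (natDegree_toQuadraticForm'_map_C_le A hle).antisymm (le_natDegree_of_ne_zero (hcoeff ▸ hlead))
  exact ⟨fun h => hlead (by rw [← hcoeff, h, coeff_zero]), ⟨d, hdeg⟩⟩

theorem anisotropic_pfisterMul_X {A : Matrix ι ι R} (hA : A.toQuadraticForm'.Anisotropic) :
    (pfisterMul X (A.map C)).toQuadraticForm'.Anisotropic := by
  intro w hw
  nontriviality R
  rw [pfisterMul, toQuadraticForm'_fromBlocks_zero, toQuadraticForm'_smul] at hw
  have hr : w ∘ Sum.inr = 0 := by
    by_contra hr
    obtain ⟨hr0, e, he⟩ := toQuadraticForm'_map_C_ne_zero_and_even hA hr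
    have hodd : ((A.map C).toQuadraticForm' (w ∘ Sum.inl)).natDegree = e + e + 1 := by
      rw [eq_neg_of_add_eq_zero_left hw, natDegree_neg, natDegree_X_mul hr0, he]
    have hl : w ∘ Sum.inl ≠ 0 := fun hl => by simp [hl] at hodd
    obtain ⟨-, d, hd⟩ := toQuadraticForm'_map_C_ne_zero_and_even hA hl
    omega
  have hl : w ∘ Sum.inl = 0 := by
    by_contra hl
    exact (toQuadraticForm'_map_C_ne_zero_and_even hA hl).1 (by simpa [hr] using hw)
  funext i
  cases i with
  | inl i => exact congrFun hl i
  | inr i => exact congrFun hr i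

theorem anisotropic_pfisterMul_X_one_pfisterMul_X_zero {A : Matrix ι ι R}
    (hA : A.toQuadraticForm'.Anisotropic) :
    (pfisterMul (MvPolynomial.X 1 : MvPolynomial (Fin 2) R) (pfisterMul (MvPolynomial.X 0)
      (A.map MvPolynomial.C))).toQuadraticForm'.Anisotropic := by
  let e := MvPolynomial.finTwoEquivPolynomialPolynomial R
  have hC : ⇑e ∘ MvPolynomial.C = C ∘ C := funext e.commutes
  refine anisotropic_of_anisotropic_map (f := (e : MvPolynomial (Fin 2) R →+* R[X][X]))
    e.injective ?_
  rw [pfisterMul_map, pfisterMul_map, map_map]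
  simp only [RingHom.coe_coe, hC, e, MvPolynomial.finTwoEquivPolynomialPolynomial_X_zero,
    MvPolynomial.finTwoEquivPolynomialPolynomial_X_one, ← map_map]
  have h := anisotropic_pfisterMul_X (anisotropic_pfisterMul_X hA)
  rwa [pfisterMul_map] at h

end Matrix

open Matrix in
theorem pfister_multiple_anisotropic_general (L : Type*) [Field L]
    (ι : Type*) [Fintype ι] [DecidableEq ι] (M : Matrix ι ι L)
    (hM : M.toQuadraticMap'.Anisotropic)
    (L2 : Type*) [Field L2] [Algebra (MvPolynomial (Fin 2) L) L2]
    [IsFractionRing (MvPolynomial (Fin 2) L) L2] [Algebra L L2]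
    [IsScalarTower L (MvPolynomial (Fin 2) L) L2]
    (s t : L2) (hs : s = algebraMap (MvPolynomial (Fin 2) L) L2 (MvPolynomial.X 0))
    (ht : t = algebraMap (MvPolynomial (Fin 2) L) L2 (MvPolynomial.X 1)) :
    (Matrix.fromBlocks
        (Matrix.fromBlocks (M.map (algebraMap L L2)) 0 0 (s • M.map (algebraMap L L2))) 0 0
        (Matrix.fromBlocks (t • M.map (algebraMap L L2)) 0 0
          ((s * t) • M.map (algebraMap L L2)))).toQuadraticMap'.Anisotropic := by
  have hC : ⇑(algebraMap (MvPolynomial (Fin 2) L) L2) ∘ MvPolynomial.C = algebraMap L L2 := by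
    rw [IsScalarTower.algebraMap_eq L (MvPolynomial (Fin 2) L) L2, MvPolynomial.algebraMap_eq]
    rfl
  have hmatrix : (pfisterMul (MvPolynomial.X 1 : MvPolynomial (Fin 2) L)
      (pfisterMul (MvPolynomial.X 0) (M.map MvPolynomial.C))).map (algebraMap _ L2) =
      fromBlocks (fromBlocks (M.map (algebraMap L L2)) 0 0 (s • M.map (algebraMap L L2))) 0 0
        (fromBlocks (t • M.map (algebraMap L L2)) 0 0 ((s * t) • M.map (algebraMap L L2))) := by
    rw [pfisterMul_map, pfisterMul_map, map_map, hC, ← hs, ← ht]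
    simp only [pfisterMul, fromBlocks_smul, smul_zero, smul_smul, mul_comm t s]
  rw [← hmatrix]
  exact anisotropic_map_algebraMap (anisotropic_pfisterMul_X_one_pfisterMul_X_zero hM)

/-- If `φ = vᵀMv` is an anisotropic quadratic form over a field `L` of
characteristic `2` and `s, t` are independent variables, then
`φ ⊥ s·φ ⊥ t·φ ⊥ st·φ = ⟨⟨s,t⟩⟩ ⊗ φ` is anisotropic over `L(s,t)`. -/
theorem pfister_multiple_anisotropic (L : Type*) [Field L] [CharP L 2]
    (ι : Type*) [Fintype ι] [DecidableEq ι] (M : Matrix ι ι L)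
    (hM : M.toQuadraticMap'.Anisotropic)
    (L2 : Type*) [Field L2] [Algebra (MvPolynomial (Fin 2) L) L2]
    [IsFractionRing (MvPolynomial (Fin 2) L) L2] [Algebra L L2]
    [IsScalarTower L (MvPolynomial (Fin 2) L) L2]
    (s t : L2) (hs : s = algebraMap (MvPolynomial (Fin 2) L) L2 (MvPolynomial.X 0))
    (ht : t = algebraMap (MvPolynomial (Fin 2) L) L2 (MvPolynomial.X 1)) :
    (Matrix.fromBlocks
        (Matrix.fromBlocks (M.map (algebraMap L L2)) 0 0 (s • M.map (algebraMap L L2))) 0 0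
        (Matrix.fromBlocks (t • M.map (algebraMap L L2)) 0 0
          ((s * t) • M.map (algebraMap L L2)))).toQuadraticMap'.Anisotropic :=
  pfister_multiple_anisotropic_general L ι M hM L2 s t hs ht
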